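/- Let G be a group, I ⊆ Z[G] the augmentation ideal and I_p = Ker(Z[G] → Z/p) the p-augmentation ideal. Define Z[G]^{[n]} := Σ_{a + m·b ≥ n} p^a I^b for fixed m ≥ 1. Then the filtration Z[G]^{[·]} defines the same topology as the I_p-adic filtration: one has Z[G]^{[mn]} ⊆ I_p^n ⊆ Z[G]^{[n]} for all n ≥ 0. -/

import Mathlib

/-! The filtration `ℤ[G]^{[·]}` is multiplicative, and `I_p = I + p ℤ[G]` lies in
`ℤ[G]^{[1]}` because `m ≥ 1`; hence `I_pⁿ ⊆ ℤ[G]^{[n]}`. Conversely `p ∈ I_p` and `I ⊆ I_p`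
give `p^a I^b ⊆ I_p^{a+b}`, and `a + m b ≥ m n` forces `a + b ≥ n`. -/

open Pointwise

noncomputable section

variable (p m : ℕ) (G : Type*) [Group G]

/-- The augmentation `ℤ[G] → ℤ`. -/
def augZ : MonoidAlgebra ℤ G →ₐ[ℤ] ℤ := (MonoidAlgebra.lift ℤ ℤ G) 1

/-- The augmentation ideal `I = Ker(ℤ[G] → ℤ)`, as a `ℤ`-submodule of `ℤ[G]`. -/
def augIdeal : Submodule ℤ (MonoidAlgebra ℤ G) := LinearMap.ker (augZ G).toLinearMap

/-- The `p`-augmentation ideal `I_p = Ker(ℤ[G] → ℤ/p)`. -/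
def augIdealP : Submodule ℤ (MonoidAlgebra ℤ G) :=
  LinearMap.ker (((Int.castRingHom (ZMod p)).comp
    (augZ G).toRingHom).toAddMonoidHom.toIntLinearMap)

/-- Powers of a two-sided ideal (as a `ℤ`-submodule), with the convention
`I^0 = ℤ[G]`. -/
def idealPow (I : Submodule ℤ (MonoidAlgebra ℤ G)) : ℕ → Submodule ℤ (MonoidAlgebra ℤ G)
  | 0 => ⊤
  | (b + 1) => I ^ (b + 1)

/-- The filtration `ℤ[G]^{[n]} := Σ_{a + m·b ≥ n} p^a I^b`. -/
def lazardFilt (n : ℕ) : Submodule ℤ (MonoidAlgebra ℤ G) :=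
  ⨆ (a : ℕ) (b : ℕ) (_ : n ≤ a + m * b),
    ((p : ℤ) ^ a • idealPow G (augIdeal G) b)

section TwoSided

variable {A : Type*} [Ring A] {K : Submodule ℤ A}

lemma mul_top_le_of_mem_iff_eq_zero {B : Type*} [Semiring B] (f : A →+* B)
    (hK : ∀ x, x ∈ K ↔ f x = 0) : K * ⊤ ≤ K :=
  Submodule.mul_le.mpr fun x hx y _ => (hK _).mpr <| by rw [map_mul, (hK x).mp hx, zero_mul]

lemma top_mul_le_of_mem_iff_eq_zero {B : Type*} [Semiring B] (f : A →+* B)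
    (hK : ∀ x, x ∈ K ↔ f x = 0) : ⊤ * K ≤ K :=
  Submodule.mul_le.mpr fun x _ y hy => (hK _).mpr <| by rw [map_mul, (hK y).mp hy, mul_zero]

lemma pow_succ_mul_top_le (hr : K * ⊤ ≤ K) (b : ℕ) : K ^ (b + 1) * ⊤ ≤ K ^ (b + 1) := by
  rw [pow_succ, mul_assoc]
  exact mul_le_mul' le_rfl hr

lemma top_mul_pow_succ_le (hl : ⊤ * K ≤ K) (b : ℕ) : ⊤ * K ^ (b + 1) ≤ K ^ (b + 1) := by
  rw [pow_succ', ← mul_assoc]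
  exact mul_le_mul' hl le_rfl

end TwoSided

lemma Submodule.smul_mul_smul_le {R A : Type*} [CommSemiring R] [Semiring A] [Algebra R A]
    (c d : R) (M N : Submodule R A) : (c • M) * (d • N) ≤ (c * d) • (M * N) := by
  refine Submodule.mul_le.mpr fun _ hx _ hy => ?_
  obtain ⟨x, hxM, rfl⟩ := (Submodule.mem_smul_pointwise_iff_exists _ _ _).mp hx
  obtain ⟨y, hyN, rfl⟩ := (Submodule.mem_smul_pointwise_iff_exists _ _ _).mp hy
  rw [smul_mul_smul_comm]
  exact Submodule.smul_mem_pointwise_smul _ _ _ (Submodule.mul_mem_mul hxM hyN)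

section idealPow

variable {G} {K K' : Submodule ℤ (MonoidAlgebra ℤ G)}

lemma pow_le_idealPow (b : ℕ) : K ^ b ≤ idealPow G K b := by
  cases b with
  | zero => exact le_top
  | succ b => exact le_rfl

lemma idealPow_mono (h : K ≤ K') (b : ℕ) : idealPow G K b ≤ idealPow G K' b := by
  cases b with
  | zero => exact le_rfl
  | succ b => exact pow_le_pow_left' h _

lemma idealPow_antitone (hr : K * ⊤ ≤ K) : Antitone (idealPow G K) := by
  refine antitone_nat_of_succ_le fun b => ?_
  cases b with
  | zero => exact le_top
  | succ b =>
    show K ^ (b + 1 + 1) ≤ K ^ (b + 1)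
    calc K ^ (b + 1 + 1) = K ^ (b + 1) * K := pow_succ _ _
      _ ≤ K ^ (b + 1) * ⊤ := mul_le_mul' le_rfl le_top
      _ ≤ K ^ (b + 1) := pow_succ_mul_top_le hr b

lemma idealPow_mul_idealPow_le (hl : ⊤ * K ≤ K) (hr : K * ⊤ ≤ K) :
    ∀ a b : ℕ, idealPow G K a * idealPow G K b ≤ idealPow G K (a + b)
  | 0, 0 => le_top
  | 0, b + 1 => by rw [Nat.zero_add]; exact top_mul_pow_succ_le hl b
  | a + 1, 0 => pow_succ_mul_top_le hr a
  | a + 1, b + 1 => (pow_add K (a + 1) (b + 1)).symm.le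

end idealPow

lemma mem_augIdeal_iff (x : MonoidAlgebra ℤ G) : x ∈ augIdeal G ↔ augZ G x = 0 := Iff.rfl

lemma mem_augIdealP_iff (x : MonoidAlgebra ℤ G) :
    x ∈ augIdealP p G ↔ ((augZ G x : ℤ) : ZMod p) = 0 := Iff.rfl

lemma top_mul_augIdeal_le : ⊤ * augIdeal G ≤ augIdeal G :=
  top_mul_le_of_mem_iff_eq_zero (augZ G).toRingHom (mem_augIdeal_iff G)

lemma augIdeal_mul_top_le : augIdeal G * ⊤ ≤ augIdeal G :=
  mul_top_le_of_mem_iff_eq_zero (augZ G).toRingHom (mem_augIdeal_iff G)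

lemma top_mul_augIdealP_le : ⊤ * augIdealP p G ≤ augIdealP p G :=
  top_mul_le_of_mem_iff_eq_zero ((Int.castRingHom (ZMod p)).comp (augZ G).toRingHom)
    (mem_augIdealP_iff p G)

lemma augIdealP_mul_top_le : augIdealP p G * ⊤ ≤ augIdealP p G :=
  mul_top_le_of_mem_iff_eq_zero ((Int.castRingHom (ZMod p)).comp (augZ G).toRingHom)
    (mem_augIdealP_iff p G)

lemma augIdeal_le_augIdealP : augIdeal G ≤ augIdealP p G := fun x hx => by
  rw [mem_augIdealP_iff, (mem_augIdeal_iff G x).mp hx, Int.cast_zero]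

lemma smul_one_mem_augIdealP : (p : ℤ) • (1 : MonoidAlgebra ℤ G) ∈ augIdealP p G := by
  simp [mem_augIdealP_iff]

lemma augIdealP_le_augIdeal_sup :
    augIdealP p G ≤ augIdeal G ⊔ (p : ℤ) • (⊤ : Submodule ℤ (MonoidAlgebra ℤ G)) := by
  intro x hx
  obtain ⟨k, hk⟩ := (ZMod.intCast_zmod_eq_zero_iff_dvd _ p).mp ((mem_augIdealP_iff p G x).mp hx)
  refine Submodule.mem_sup.mpr ⟨x - augZ G x • 1, ?_, augZ G x • 1, ?_, sub_add_cancel _ _⟩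
  · rw [mem_augIdeal_iff, map_sub, map_smul, map_one, smul_eq_mul, mul_one, sub_self]
  · rw [hk, mul_smul]
    exact Submodule.smul_mem_pointwise_smul _ _ _ Submodule.mem_top

lemma le_lazardFilt {n a b : ℕ} (h : n ≤ a + m * b) :
    (p : ℤ) ^ a • idealPow G (augIdeal G) b ≤ lazardFilt p m G n :=
  le_iSup_of_le a <| le_iSup_of_le b <| le_iSup_of_le h le_rfl

lemma lazardFilt_zero : lazardFilt p m G 0 = ⊤ :=
  top_le_iff.mp <| by simpa [idealPow] using le_lazardFilt p m G (n := 0) (a := 0) (b := 0) le_rfl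

lemma lazardFilt_mul_le (k l : ℕ) :
    lazardFilt p m G k * lazardFilt p m G l ≤ lazardFilt p m G (k + l) := by
  conv_lhs => simp only [lazardFilt, Submodule.iSup_mul, Submodule.mul_iSup]
  refine iSup_le fun c => iSup_le fun d => iSup_le fun hcd =>
    iSup_le fun a => iSup_le fun b => iSup_le fun hab => ?_
  have hI := idealPow_mul_idealPow_le (top_mul_augIdeal_le G) (augIdeal_mul_top_le G) b d
  refine (Submodule.smul_mul_smul_le _ _ _ _).trans ?_
  rw [← pow_add]
  exact (smul_mono_right _ hI).trans (le_lazardFilt p m G (by rw [Nat.mul_add]; omega))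

lemma lazardFilt_pow_le (k n : ℕ) : lazardFilt p m G k ^ n ≤ lazardFilt p m G (k * n) := by
  induction n with
  | zero => simp [lazardFilt_zero]
  | succ n ih =>
    calc lazardFilt p m G k ^ (n + 1) = lazardFilt p m G k ^ n * lazardFilt p m G k :=
          pow_succ _ _
      _ ≤ lazardFilt p m G (k * n) * lazardFilt p m G k := mul_le_mul' ih le_rfl
      _ ≤ lazardFilt p m G (k * (n + 1)) := lazardFilt_mul_le p m G _ _

lemma augIdealP_le_lazardFilt_one (hm : 1 ≤ m) : augIdealP p G ≤ lazardFilt p m G 1 := by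
  refine (augIdealP_le_augIdeal_sup p G).trans (sup_le ?_ ?_)
  · simpa [idealPow] using le_lazardFilt p m G (n := 1) (a := 0) (b := 1) (by omega)
  · simpa [idealPow] using le_lazardFilt p m G (n := 1) (a := 1) (b := 0) le_rfl

lemma idealPow_augIdealP_le_lazardFilt (hm : 1 ≤ m) :
    ∀ n, idealPow G (augIdealP p G) n ≤ lazardFilt p m G n
  | 0 => (lazardFilt_zero p m G).ge
  | n + 1 =>
    calc augIdealP p G ^ (n + 1) ≤ lazardFilt p m G 1 ^ (n + 1) :=
          pow_le_pow_left' (augIdealP_le_lazardFilt_one p m G hm) _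
      _ ≤ lazardFilt p m G (n + 1) := by simpa using lazardFilt_pow_le p m G 1 (n + 1)

lemma smul_idealPow_augIdeal_le (a b : ℕ) :
    (p : ℤ) ^ a • idealPow G (augIdeal G) b ≤ idealPow G (augIdealP p G) (a + b) := by
  intro _ hx
  obtain ⟨y, hy, rfl⟩ := (Submodule.mem_smul_pointwise_iff_exists _ _ _).mp hx
  have hpa : (p : ℤ) ^ a • (1 : MonoidAlgebra ℤ G) ∈ idealPow G (augIdealP p G) a := by
    rw [← one_pow a, ← smul_pow]
    exact pow_le_idealPow a (Submodule.pow_mem_pow _ (smul_one_mem_augIdealP p G) a)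
  rw [← smul_one_mul]
  exact idealPow_mul_idealPow_le (top_mul_augIdealP_le p G) (augIdealP_mul_top_le p G) a b
    (Submodule.mul_mem_mul hpa (idealPow_mono (augIdeal_le_augIdealP p G) b hy))

lemma lazardFilt_le_idealPow_augIdealP (hm : 1 ≤ m) (n : ℕ) :
    lazardFilt p m G (m * n) ≤ idealPow G (augIdealP p G) n := by
  refine iSup_le fun a => iSup_le fun b => iSup_le fun h => ?_
  have hab : n ≤ a + b := Nat.le_of_mul_le_mul_left (by nlinarith) hm
  exact (smul_idealPow_augIdeal_le p G a b).trans (idealPow_antitone (augIdealP_mul_top_le p G) hab)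

theorem stmt_17 (hm : 1 ≤ m) (n : ℕ) :
    lazardFilt p m G (m * n) ≤ idealPow G (augIdealP p G) n ∧
    idealPow G (augIdealP p G) n ≤ lazardFilt p m G n :=
  ⟨lazardFilt_le_idealPow_augIdealP p m G hm n, idealPow_augIdealP_le_lazardFilt p m G hm n⟩

end
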